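/- arXiv:1605.03510 — 2 statements merged into one kernel-verified Lean document; each statement's English description precedes it below -/
import Mathlib

section
/- Let d ≥ 1, Ω ⊆ ℝ^d open, and ρ : Ω → (0,∞) smooth. Then the following two identities of vector fields hold on Ω: 2 ρ ∇( Δ√ρ / √ρ ) = div( ρ ∇² log ρ ) and 2 ρ ∇( Δ√ρ / √ρ ) = ∇Δρ − 4 div( ∇√ρ ⊗ ∇√ρ ). -/
open MeasureTheory Real

noncomputable section

/-- Partial derivative of a scalar field in the coordinate direction `i`. -/
def pd {d : ℕ} (i : Fin d) (f : (Fin d → ℝ) → ℝ) (x : Fin d → ℝ) : ℝ :=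
  fderiv ℝ f x (Pi.single i 1)

/-- Gradient of a scalar field. -/
def grad {d : ℕ} (f : (Fin d → ℝ) → ℝ) (x : Fin d → ℝ) : Fin d → ℝ :=
  fun i => pd i f x

/-- Divergence of a vector field. -/
def dvg {d : ℕ} (u : (Fin d → ℝ) → (Fin d → ℝ)) (x : Fin d → ℝ) : ℝ :=
  ∑ i, pd i (fun y => u y i) x

/-- Row-wise divergence of a matrix field: `(dvgM M x) i = ∑ j, ∂_j M_{ij}`. -/
def dvgM {d : ℕ} (M : (Fin d → ℝ) → Fin d → Fin d → ℝ) (x : Fin d → ℝ) : Fin d → ℝ :=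
  fun i => ∑ j, pd j (fun y => M y i j) x

/-- Hessian of a scalar field. -/
def hess {d : ℕ} (f : (Fin d → ℝ) → ℝ) (x : Fin d → ℝ) : Fin d → Fin d → ℝ :=
  fun i j => pd i (fun y => pd j f y) x

/-- Laplacian of a scalar field. -/
def lap {d : ℕ} (f : (Fin d → ℝ) → ℝ) (x : Fin d → ℝ) : ℝ :=
  ∑ i, pd i (fun y => pd i f y) x

/-- Jacobian matrix of a vector field: `(jac u x) i j = ∂_j u_i`. -/
def jac {d : ℕ} (u : (Fin d → ℝ) → (Fin d → ℝ)) (x : Fin d → ℝ) : Fin d → Fin d → ℝ :=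
  fun i j => pd j (fun y => u y i) x

/-- Symmetric part of the gradient of a vector field, `Du = (∇u + (∇u)ᵀ)/2`. -/
def symD {d : ℕ} (u : (Fin d → ℝ) → (Fin d → ℝ)) (x : Fin d → ℝ) : Fin d → Fin d → ℝ :=
  fun i j => (jac u x i j + jac u x j i) / 2

/-- Antisymmetric part of the gradient of a vector field, `Au = (∇u − (∇u)ᵀ)/2`. -/
def antiD {d : ℕ} (u : (Fin d → ℝ) → (Fin d → ℝ)) (x : Fin d → ℝ) : Fin d → Fin d → ℝ :=
  fun i j => (jac u x i j - jac u x j i) / 2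

/-- Tensor product of two vectors: `(a ⊗ b)_{ij} = a_i b_j`. -/
def tens {d : ℕ} (a b : Fin d → ℝ) : Fin d → Fin d → ℝ := fun i j => a i * b j

/-- ℤ^d-periodicity: a function of this kind descends to the torus `T^d = ℝ^d/ℤ^d`. -/
def SpacePeriodic {d : ℕ} {E : Type*} (f : (Fin d → ℝ) → E) : Prop :=
  ∀ x : Fin d → ℝ, ∀ n : Fin d → ℤ, f (x + fun i => (n i : ℝ)) = f x

/-- Fundamental domain of the torus `T^d = ℝ^d/ℤ^d` (with its probability Lebesgue measure). -/
def unitBox (d : ℕ) : Set (Fin d → ℝ) := Set.Icc 0 1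

open scoped ContDiff

section Helpers
variable {d : ℕ} {f g : (Fin d → ℝ) → ℝ} {x : Fin d → ℝ} {i j : Fin d}

lemma pd_congr (h : f =ᶠ[nhds x] g) (i : Fin d) : pd i f x = pd i g x := by
  unfold pd; rw [Filter.EventuallyEq.fderiv_eq h]

lemma pd_add (hf : DifferentiableAt ℝ f x) (hg : DifferentiableAt ℝ g x) (i : Fin d) :
    pd i (fun y => f y + g y) x = pd i f x + pd i g x := by
  unfold pd; rw [fderiv_fun_add hf hg]; rfl

lemma pd_sub (hf : DifferentiableAt ℝ f x) (hg : DifferentiableAt ℝ g x) (i : Fin d) :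
    pd i (fun y => f y - g y) x = pd i f x - pd i g x := by
  unfold pd; rw [fderiv_fun_sub hf hg]; rfl

lemma pd_mul (hf : DifferentiableAt ℝ f x) (hg : DifferentiableAt ℝ g x) (i : Fin d) :
    pd i (fun y => f y * g y) x = pd i f x * g x + f x * pd i g x := by
  unfold pd; rw [fderiv_fun_mul hf hg]; simp; ring

lemma pd_const_mul (c : ℝ) (hf : DifferentiableAt ℝ f x) (i : Fin d) :
    pd i (fun y => c * f y) x = c * pd i f x := by
  unfold pd; rw [fderiv_const_mul hf]; rfl

lemma pd_sum {ι : Type*} (s : Finset ι) (F : ι → (Fin d → ℝ) → ℝ)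
    (hf : ∀ j ∈ s, DifferentiableAt ℝ (F j) x) (i : Fin d) :
    pd i (fun y => ∑ j ∈ s, F j y) x = ∑ j ∈ s, pd i (F j) x := by
  unfold pd; rw [fderiv_fun_sum hf]; simp

lemma pd_comp' (h : ℝ → ℝ) (h' : ℝ) (hh : HasDerivAt h h' (f x)) (hf : DifferentiableAt ℝ f x)
    (i : Fin d) : pd i (fun y => h (f y)) x = h' * pd i f x := by
  unfold pd
  have h2 := (hh.hasFDerivAt.comp x hf.hasFDerivAt).fderiv
  rw [show (fun y => h (f y)) = h ∘ f from rfl, h2]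
  simp [mul_comm]

lemma pd_inv (hf : DifferentiableAt ℝ f x) (hfx : f x ≠ 0) (i : Fin d) :
    pd i (fun y => (f y)⁻¹) x = -pd i f x / f x ^ 2 := by
  rw [pd_comp' (fun t => t⁻¹) (-(f x ^ 2)⁻¹) (hasDerivAt_inv hfx) hf]
  field_simp

lemma pd_divv (hf : DifferentiableAt ℝ f x) (hg : DifferentiableAt ℝ g x) (hgx : g x ≠ 0)
    (i : Fin d) :
    pd i (fun y => f y / g y) x = (pd i f x * g x - f x * pd i g x) / g x ^ 2 := by
  have h1 : pd i (fun y => f y * (g y)⁻¹) x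
      = pd i f x * (g x)⁻¹ + f x * pd i (fun y => (g y)⁻¹) x := pd_mul hf (hg.inv hgx) i
  simp only [div_eq_mul_inv, h1, pd_inv hg hgx]
  field_simp
  ring

lemma pd_sqrt (hf : DifferentiableAt ℝ f x) (hfx : 0 < f x) (i : Fin d) :
    pd i (fun y => Real.sqrt (f y)) x = pd i f x / (2 * Real.sqrt (f x)) := by
  have h := Real.hasDerivAt_sqrt (ne_of_gt hfx)
  rw [pd_comp' Real.sqrt _ h hf]
  field_simp

lemma pd_log (hf : DifferentiableAt ℝ f x) (hfx : 0 < f x) (i : Fin d) :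
    pd i (fun y => Real.log (f y)) x = pd i f x / f x := by
  have h := Real.hasDerivAt_log (ne_of_gt hfx)
  rw [pd_comp' Real.log _ h hf]
  field_simp

lemma contDiffAt_pd (hf : ContDiffAt ℝ ∞ f x) (i : Fin d) : ContDiffAt ℝ ∞ (pd i f) x := by
  have h1 : ContDiffAt ℝ ∞ (fderiv ℝ f) x := hf.fderiv_right (by simp)
  exact h1.clm_apply (contDiffAt_const (c := (Pi.single i 1 : Fin d → ℝ)))

lemma pd_pd_eq (hf : DifferentiableAt ℝ (fderiv ℝ f) x) (i j : Fin d) :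
    pd i (pd j f) x = fderiv ℝ (fderiv ℝ f) x (Pi.single i 1) (Pi.single j 1) := by
  unfold pd
  have h : (fun y => fderiv ℝ f y (Pi.single j 1))
      = (ContinuousLinearMap.apply ℝ ℝ (Pi.single j 1 : Fin d → ℝ)) ∘ (fderiv ℝ f) := rfl
  rw [h, fderiv_comp x (ContinuousLinearMap.apply ℝ ℝ _).differentiableAt hf,
    ContinuousLinearMap.fderiv]
  rfl

lemma pd_symm (hf : ContDiffAt ℝ ∞ f x) (i j : Fin d) :
    pd i (pd j f) x = pd j (pd i f) x := by
  have hd : DifferentiableAt ℝ (fderiv ℝ f) x :=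
    (hf.fderiv_right (by simp : ∞ + 1 ≤ ∞)).differentiableAt (by simp)
  rw [pd_pd_eq hd, pd_pd_eq hd]
  exact hf.isSymmSndFDerivAt (by rw [minSmoothness_of_isRCLikeNormedField]; exact WithTop.coe_le_coe.2 le_top) _ _

lemma sum_lin {d : ℕ} (F G H K : Fin d → ℝ) (a b c e : ℝ) :
    ∑ j, (a * F j + b * G j + c * H j + e * K j)
      = a * (∑ j, F j) + b * (∑ j, G j) + c * (∑ j, H j) + e * (∑ j, K j) := by
  simp [Finset.sum_add_distrib, Finset.mul_sum]

lemma alg1 (X P s : ℝ) (hs : s ≠ 0) :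
    (X * (2 * s) - P * (2 * (P / (2 * s)))) / (2 * s) ^ 2
      = X / (2 * s) - P * P / (4 * (s * s * s)) := by
  field_simp
  ring

lemma alg2 (q p s : ℝ) (hs : s ≠ 0) :
    (q / (2 * s) - p * p / (4 * (s * s * s))) / s
      = q / (2 * (s * s)) - p * p / (4 * (s * s * (s * s))) := by
  field_simp

lemma alg3 (a b s : ℝ) (hs : s ≠ 0) :
    a / (2 * s) * (b / (2 * s)) = a * b / (4 * (s * s)) := by
  rw [div_mul_div_comm]
  congr 1
  ring

lemma diffAt_div {d : ℕ} {f g : (Fin d → ℝ) → ℝ} {x : Fin d → ℝ} (hf : DifferentiableAt ℝ f x)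
    (hg : DifferentiableAt ℝ g x) (hgx : g x ≠ 0) :
    DifferentiableAt ℝ (fun y => f y / g y) x := by
  simp only [div_eq_mul_inv]
  exact hf.mul (hg.inv hgx)

end Helpers

set_option maxHeartbeats 1000000 in
theorem statement0 (d : ℕ) (hd : 1 ≤ d) (Ω : Set (Fin d → ℝ)) (hΩ : IsOpen Ω)
    (ρ : (Fin d → ℝ) → ℝ) (hρpos : ∀ x ∈ Ω, 0 < ρ x) (hρ : ContDiffOn ℝ (⊤ : ℕ∞) ρ Ω) :
    ∀ x ∈ Ω, ∀ i : Fin d,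
      (2 * ρ x * grad (fun y => lap (fun z => Real.sqrt (ρ z)) y / Real.sqrt (ρ y)) x i
        = dvgM (fun y i' j => ρ y * hess (fun z => Real.log (ρ z)) y i' j) x i)
      ∧
      (2 * ρ x * grad (fun y => lap (fun z => Real.sqrt (ρ z)) y / Real.sqrt (ρ y)) x i
        = grad (fun y => lap ρ y) x i
          - 4 * dvgM (fun y => tens (grad (fun z => Real.sqrt (ρ z)) y)
              (grad (fun z => Real.sqrt (ρ z)) y)) x i) := by
  intro x hx i
  have hΩx : Ω ∈ nhds x := hΩ.mem_nhds hx
  have hC : ∀ y ∈ Ω, ContDiffAt ℝ ∞ ρ y :=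
    fun y hy => (hρ.contDiffAt (hΩ.mem_nhds hy)).of_le (by simp)
  have hpos : ∀ y ∈ Ω, 0 < ρ y := hρpos
  have hne : ∀ y ∈ Ω, ρ y ≠ 0 := fun y hy => ne_of_gt (hpos y hy)
  have hsne : ∀ y ∈ Ω, Real.sqrt (ρ y) ≠ 0 :=
    fun y hy => ne_of_gt (Real.sqrt_pos.2 (hpos y hy))
  have hsq : ∀ y ∈ Ω, Real.sqrt (ρ y) * Real.sqrt (ρ y) = ρ y :=
    fun y hy => Real.mul_self_sqrt (le_of_lt (hpos y hy))
  have Dρ : ∀ y ∈ Ω, DifferentiableAt ℝ ρ y :=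
    fun y hy => (hC y hy).differentiableAt (by simp)
  have Cpd : ∀ y ∈ Ω, ∀ j, ContDiffAt ℝ ∞ (pd j ρ) y :=
    fun y hy j => contDiffAt_pd (hC y hy) j
  have Dpd : ∀ y ∈ Ω, ∀ j, DifferentiableAt ℝ (pd j ρ) y :=
    fun y hy j => (Cpd y hy j).differentiableAt (by simp)
  have Dpd2 : ∀ y ∈ Ω, ∀ k j, DifferentiableAt ℝ (pd k (pd j ρ)) y :=
    fun y hy k j => (contDiffAt_pd (Cpd y hy j) k).differentiableAt (by simp)
  have Dsqrt : ∀ y ∈ Ω, DifferentiableAt ℝ (fun z => Real.sqrt (ρ z)) y :=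
    fun y hy => ((hC y hy).sqrt (hne y hy)).differentiableAt (by simp)
  have F1 : ∀ y ∈ Ω, ∀ j, pd j (fun z => Real.sqrt (ρ z)) y
      = pd j ρ y / (2 * Real.sqrt (ρ y)) :=
    fun y hy j => pd_sqrt (Dρ y hy) (hpos y hy) j
  have F2 : ∀ y ∈ Ω, ∀ j, pd j (fun z => Real.log (ρ z)) y = pd j ρ y / ρ y :=
    fun y hy j => pd_log (Dρ y hy) (hpos y hy) j
  have Hσ : ∀ y ∈ Ω, ∀ j, pd j (pd j (fun z => Real.sqrt (ρ z))) y
      = pd j (pd j ρ) y / (2 * Real.sqrt (ρ y))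
        - pd j ρ y * pd j ρ y / (4 * (Real.sqrt (ρ y) * Real.sqrt (ρ y) * Real.sqrt (ρ y))) := by
    intro y hy j
    have hev : (pd j (fun z => Real.sqrt (ρ z))) =ᶠ[nhds y]
        (fun z => pd j ρ z / (2 * Real.sqrt (ρ z))) := by
      filter_upwards [hΩ.mem_nhds hy] with z hz using F1 z hz j
    rw [pd_congr hev j]
    have hden : DifferentiableAt ℝ (fun z => 2 * Real.sqrt (ρ z)) y := (Dsqrt y hy).const_mul 2
    rw [pd_divv (Dpd y hy j) hden (by simp [hsne y hy]) j,
      pd_const_mul 2 (Dsqrt y hy) j, F1 y hy j]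
    exact alg1 _ _ _ (hsne y hy)
  have Hlog : ∀ y ∈ Ω, ∀ j, pd i (pd j (fun z => Real.log (ρ z))) y
      = pd i (pd j ρ) y / ρ y - pd i ρ y * pd j ρ y / (ρ y * ρ y) := by
    intro y hy j
    have hev : (pd j (fun z => Real.log (ρ z))) =ᶠ[nhds y] (fun z => pd j ρ z / ρ z) := by
      filter_upwards [hΩ.mem_nhds hy] with z hz using F2 z hz j
    rw [pd_congr hev i, pd_divv (Dpd y hy j) (Dρ y hy) (hne y hy) i]
    field_simp [hne y hy]
  have C1 : ∀ y ∈ Ω,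
      (∑ k, pd k (pd k (fun z => Real.sqrt (ρ z))) y) / Real.sqrt (ρ y)
        = (∑ k, pd k (pd k ρ) y) / (2 * ρ y)
          - (∑ k, pd k ρ y * pd k ρ y) / (4 * (ρ y * ρ y)) := by
    intro y hy
    rw [Finset.sum_congr rfl (fun k _ => Hσ y hy k), Finset.sum_div, Finset.sum_div,
      Finset.sum_div, ← Finset.sum_sub_distrib]
    refine Finset.sum_congr rfl fun k _ => ?_
    have hss : ρ y = Real.sqrt (ρ y) * Real.sqrt (ρ y) := (hsq y hy).symm
    conv_rhs => rw [hss]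
    exact alg2 _ _ _ (hsne y hy)
  have hA : DifferentiableAt ℝ (fun y => ∑ k, pd k (pd k ρ) y) x :=
    DifferentiableAt.fun_sum (fun k _ => Dpd2 x hx k k)
  have hB : DifferentiableAt ℝ (fun y => ∑ k, pd k ρ y * pd k ρ y) x :=
    DifferentiableAt.fun_sum (fun k _ => (Dpd x hx k).mul (Dpd x hx k))
  have hlapval : pd i (fun y => ∑ k, pd k (pd k ρ) y) x = ∑ k, pd i (pd k (pd k ρ)) x :=
    pd_sum Finset.univ (fun k => pd k (pd k ρ)) (fun k _ => Dpd2 x hx k k) i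
  have hsqval : pd i (fun y => ∑ k, pd k ρ y * pd k ρ y) x
      = ∑ k, (pd i (pd k ρ) x * pd k ρ x + pd k ρ x * pd i (pd k ρ) x) := by
    rw [pd_sum Finset.univ (fun k => fun y => pd k ρ y * pd k ρ y)
      (fun k _ => (Dpd x hx k).mul (Dpd x hx k)) i]
    exact Finset.sum_congr rfl fun k _ => pd_mul (Dpd x hx k) (Dpd x hx k) i
  have hL : pd i (fun y => (∑ k, pd k (pd k (fun z => Real.sqrt (ρ z))) y) / Real.sqrt (ρ y)) x
      = ((∑ k, pd i (pd k (pd k ρ)) x) * (2 * ρ x)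
            - (∑ k, pd k (pd k ρ) x) * (2 * pd i ρ x)) / (2 * ρ x) ^ 2
        - ((∑ k, (pd i (pd k ρ) x * pd k ρ x + pd k ρ x * pd i (pd k ρ) x)) * (4 * (ρ x * ρ x))
            - (∑ k, pd k ρ x * pd k ρ x) * (4 * (pd i ρ x * ρ x + ρ x * pd i ρ x)))
              / (4 * (ρ x * ρ x)) ^ 2 := by
    have hev : (fun y => (∑ k, pd k (pd k (fun z => Real.sqrt (ρ z))) y) / Real.sqrt (ρ y))
        =ᶠ[nhds x] (fun y => (∑ k, pd k (pd k ρ) y) / (2 * ρ y)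
          - (∑ k, pd k ρ y * pd k ρ y) / (4 * (ρ y * ρ y))) := by
      filter_upwards [hΩx] with z hz using C1 z hz
    rw [pd_congr hev i]
    have h2ne : (2 : ℝ) * ρ x ≠ 0 := by simp [hne x hx]
    have h4ne : (4 : ℝ) * (ρ x * ρ x) ≠ 0 := by simp [hne x hx]
    have d1 : DifferentiableAt ℝ (fun y => (∑ k, pd k (pd k ρ) y) / (2 * ρ y)) x :=
      diffAt_div hA ((Dρ x hx).const_mul 2) h2ne
    have d2 : DifferentiableAt ℝ (fun y => (∑ k, pd k ρ y * pd k ρ y) / (4 * (ρ y * ρ y))) x :=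
      diffAt_div hB (((Dρ x hx).mul (Dρ x hx)).const_mul 4) h4ne
    rw [pd_sub d1 d2 i,
      pd_divv hA ((Dρ x hx).const_mul 2) h2ne i,
      pd_divv hB (((Dρ x hx).fun_mul (Dρ x hx)).const_mul 4) h4ne i,
      pd_const_mul 2 (Dρ x hx) i, pd_const_mul 4 ((Dρ x hx).fun_mul (Dρ x hx)) i,
      pd_mul (Dρ x hx) (Dρ x hx) i, hlapval, hsqval]
  have hR1 : ∀ j, pd j (fun y => ρ y * pd i (pd j (fun z => Real.log (ρ z))) y) x
      = pd i (pd j (pd j ρ)) x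
        - ((pd i (pd j ρ) x * pd j ρ x + pd i ρ x * pd j (pd j ρ) x) * ρ x
            - pd i ρ x * pd j ρ x * pd j ρ x) / ρ x ^ 2 := by
    intro j
    have hev : (fun y => ρ y * pd i (pd j (fun z => Real.log (ρ z))) y) =ᶠ[nhds x]
        (fun y => pd i (pd j ρ) y - pd i ρ y * pd j ρ y / ρ y) := by
      filter_upwards [hΩx] with z hz
      rw [Hlog z hz j]
      field_simp [hne z hz]
    rw [pd_congr hev j]
    have dnum : DifferentiableAt ℝ (fun y => pd i ρ y * pd j ρ y) x :=
      (Dpd x hx i).mul (Dpd x hx j)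
    rw [pd_sub (Dpd2 x hx i j) (diffAt_div dnum (Dρ x hx) (hne x hx)) j,
      pd_divv dnum (Dρ x hx) (hne x hx) j,
      pd_mul (Dpd x hx i) (Dpd x hx j) j,
      ← pd_symm (Cpd x hx j) i j,
      ← pd_symm (hC x hx) i j]
  have hR2 : ∀ j, pd j (fun y => pd i (fun z => Real.sqrt (ρ z)) y
        * pd j (fun z => Real.sqrt (ρ z)) y) x
      = ((pd i (pd j ρ) x * pd j ρ x + pd i ρ x * pd j (pd j ρ) x) * (4 * ρ x)
          - pd i ρ x * pd j ρ x * (4 * pd j ρ x)) / (4 * ρ x) ^ 2 := by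
    intro j
    have hev : (fun y => pd i (fun z => Real.sqrt (ρ z)) y * pd j (fun z => Real.sqrt (ρ z)) y)
        =ᶠ[nhds x] (fun y => pd i ρ y * pd j ρ y / (4 * ρ y)) := by
      filter_upwards [hΩx] with z hz
      rw [F1 z hz i, F1 z hz j]
      have hss : ρ z = Real.sqrt (ρ z) * Real.sqrt (ρ z) := (hsq z hz).symm
      conv_rhs => rw [hss]
      exact alg3 _ _ _ (hsne z hz)
    rw [pd_congr hev j]
    have dnum : DifferentiableAt ℝ (fun y => pd i ρ y * pd j ρ y) x :=
      (Dpd x hx i).mul (Dpd x hx j)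
    rw [pd_divv dnum ((Dρ x hx).const_mul 4) (by simp [hne x hx]) j,
      pd_const_mul 4 (Dρ x hx) j, pd_mul (Dpd x hx i) (Dpd x hx j) j,
      ← pd_symm (hC x hx) i j]
  have e2 : (∑ k, (pd i (pd k ρ) x * pd k ρ x + pd k ρ x * pd i (pd k ρ) x))
      = 2 * ∑ k, pd i (pd k ρ) x * pd k ρ x := by
    rw [Finset.mul_sum]
    exact Finset.sum_congr rfl fun k _ => by ring
  have hr0 : ρ x ≠ 0 := hne x hx
  constructor
  · simp only [grad, dvgM, hess, lap, tens]
    rw [hL, e2, Finset.sum_congr rfl (fun j _ => hR1 j)]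
    have e1 : ∑ j, (pd i (pd j (pd j ρ)) x
          - ((pd i (pd j ρ) x * pd j ρ x + pd i ρ x * pd j (pd j ρ) x) * ρ x
              - pd i ρ x * pd j ρ x * pd j ρ x) / ρ x ^ 2)
        = 1 * (∑ j, pd i (pd j (pd j ρ)) x)
          + (-(ρ x / ρ x ^ 2)) * (∑ j, pd i (pd j ρ) x * pd j ρ x)
          + (-(pd i ρ x * ρ x / ρ x ^ 2)) * (∑ j, pd j (pd j ρ) x)
          + (pd i ρ x / ρ x ^ 2) * (∑ j, pd j ρ x * pd j ρ x) := by
      rw [← sum_lin]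
      exact Finset.sum_congr rfl fun j _ => by ring
    rw [e1]
    field_simp
    ring
  · simp only [grad, dvgM, hess, lap, tens]
    rw [hL, e2, hlapval, Finset.sum_congr rfl (fun j _ => hR2 j)]
    have e3 : ∑ j, (((pd i (pd j ρ) x * pd j ρ x + pd i ρ x * pd j (pd j ρ) x) * (4 * ρ x)
            - pd i ρ x * pd j ρ x * (4 * pd j ρ x)) / (4 * ρ x) ^ 2)
        = (4 * ρ x / (4 * ρ x) ^ 2) * (∑ j, pd i (pd j ρ) x * pd j ρ x)
          + (pd i ρ x * (4 * ρ x) / (4 * ρ x) ^ 2) * (∑ j, pd j (pd j ρ) x)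
          + (-(4 * pd i ρ x / (4 * ρ x) ^ 2)) * (∑ j, pd j ρ x * pd j ρ x)
          + 0 * (∑ j, pd j ρ x * pd j ρ x) := by
      rw [← sum_lin]
      exact Finset.sum_congr rfl fun j _ => by ring
    rw [e3]
    field_simp
    ring

end
end

section
/- Let ε > 0, γ > 1, d ∈ {1,2,3}, and ρ > 0. Then for every symmetric d×d real matrix S one has h_ε(ρ) |S|² + g_ε(ρ) (tr S)² ≥ (5/8) h_ε(ρ) |S|², where |S| is the Frobenius norm and tr S the trace. -/
open MeasureTheory Real

noncomputable section

/-- The approximating viscosity coefficient `h_ε(r) = r + ε r^{7/8} + ε r^γ`. -/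
def hfun (ε γ r : ℝ) : ℝ := r + ε * r ^ ((7 : ℝ) / 8) + ε * r ^ γ

/-- `g_ε(r) = r h_ε'(r) − h_ε(r)`. -/
def gfun (ε γ r : ℝ) : ℝ := r * deriv (hfun ε γ) r - hfun ε γ r

/-- `λ(ε) = e^{−1/ε⁴}`. -/
def lamfun (ε : ℝ) : ℝ := Real.exp (-1 / ε ^ 4)

/-- The damping coefficient `p̃_ε(r) = λ(ε)(r^{1/ε²} + r^{−1/ε²})`. -/
def ptil (ε r : ℝ) : ℝ := lamfun ε * (r ^ (1 / ε ^ 2) + r ^ (-(1 / ε ^ 2)))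

/-- `μ = ν − √(ν² − κ²)`. -/
def muof (ν κ : ℝ) : ℝ := ν - Real.sqrt (ν ^ 2 - κ ^ 2)

/-- `p_ε` is an antiderivative on `(0,∞)` of `r ↦ μ p̃_ε(r) h_ε'(r) / r`. -/
def IsPeps (ε γ ν κ : ℝ) (P : ℝ → ℝ) : Prop :=
  ∀ r : ℝ, 0 < r → HasDerivAt P (muof ν κ * ptil ε r * deriv (hfun ε γ) r / r) r

/-- `φ_ε` is a smooth function on `(0,∞)` with `r φ_ε'(r) = h_ε'(r)`. -/
def IsPhieps (ε γ : ℝ) (Φ : ℝ → ℝ) : Prop :=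
  ContDiffOn ℝ (⊤ : ℕ∞) Φ (Set.Ioi 0) ∧ ∀ r : ℝ, 0 < r → r * deriv Φ r = deriv (hfun ε γ) r

/-- `f_ε` satisfies `r f_ε'(r) − f_ε(r) = p_ε(r)` on `(0,∞)`. -/
def IsFeps (P F : ℝ → ℝ) : Prop :=
  (∀ r : ℝ, 0 < r → DifferentiableAt ℝ F r) ∧
  ∀ r : ℝ, 0 < r → r * deriv F r - F r = P r

/-- The vector field `∇( h_ε'(ρ) div(h_ε'(ρ) ∇√ρ) / √ρ )`; the capillarity term of (QNS_ε) is
`2 κ² ρ` times this field. -/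
def Kvec {d : ℕ} (ε γ : ℝ) (ρ : (Fin d → ℝ) → ℝ) (x : Fin d → ℝ) : Fin d → ℝ :=
  grad (fun y => deriv (hfun ε γ) (ρ y) *
      dvg (fun z => deriv (hfun ε γ) (ρ z) • grad (fun w => Real.sqrt (ρ w)) z) y /
      Real.sqrt (ρ y)) x

/-- A smooth solution of the approximating system (QNS_ε) on `(0,T) × T^d`:
a pair of `C^∞` functions on `[0,T] × T^d` with `ρ > 0` everywhere, satisfying the continuity
equation and the momentum equation pointwise. -/
def IsQNSSol (d : ℕ) (ε γ ν κ T : ℝ) (P : ℝ → ℝ)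
    (ρ : ℝ → (Fin d → ℝ) → ℝ) (u : ℝ → (Fin d → ℝ) → (Fin d → ℝ)) : Prop :=
  ContDiffOn ℝ (⊤ : ℕ∞) (fun p : ℝ × (Fin d → ℝ) => ρ p.1 p.2) (Set.Icc 0 T ×ˢ Set.univ) ∧
  ContDiffOn ℝ (⊤ : ℕ∞) (fun p : ℝ × (Fin d → ℝ) => u p.1 p.2) (Set.Icc 0 T ×ˢ Set.univ) ∧
  (∀ t x, 0 < ρ t x) ∧
  (∀ t, SpacePeriodic (ρ t)) ∧
  (∀ t, SpacePeriodic (u t)) ∧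
  (∀ t ∈ Set.Ioo 0 T, ∀ x : Fin d → ℝ,
    deriv (fun s => ρ s x) t + dvg (fun y => ρ t y • u t y) x = 0) ∧
  (∀ t ∈ Set.Ioo 0 T, ∀ x : Fin d → ℝ, ∀ i : Fin d,
    deriv (fun s => ρ s x * u s x i) t
      + dvgM (fun y i' j => ρ t y * u t y i' * u t y j) x i
      + grad (fun y => ρ t y ^ γ + P (ρ t y)) x i
      + ptil ε (ρ t x) * u t x i
    = 2 * ν * dvgM (fun y i' j => hfun ε γ (ρ t y) * symD (u t) y i' j) x i
      + 2 * ν * grad (fun y => gfun ε γ (ρ t y) * dvg (u t) y) x i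
      + 2 * κ ^ 2 * ρ t x * Kvec ε γ (ρ t) x i)

lemma hfun_hasDerivAt (ε γ r : ℝ) (hr : 0 < r) :
    HasDerivAt (hfun ε γ) (1 + ε * ((7 : ℝ)/8 * r ^ ((7:ℝ)/8 - 1)) + ε * (γ * r ^ (γ - 1))) r := by
  have h1 : HasDerivAt (fun x : ℝ => x) 1 r := hasDerivAt_id r
  have h2 := (Real.hasDerivAt_rpow_const (x := r) (p := (7:ℝ)/8) (Or.inl hr.ne')).const_mul ε
  have h3 := (Real.hasDerivAt_rpow_const (x := r) (p := γ) (Or.inl hr.ne')).const_mul ε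
  exact (h1.add h2).add h3

lemma gfun_eq (ε γ r : ℝ) (hr : 0 < r) :
    gfun ε γ r = -(ε/8) * r ^ ((7:ℝ)/8) + ε * (γ - 1) * r ^ γ := by
  have hd := (hfun_hasDerivAt ε γ r hr).deriv
  unfold gfun
  rw [hd]
  unfold hfun
  have e1 : r ^ ((7:ℝ)/8 - 1) = r ^ ((7:ℝ)/8) / r := by
    rw [Real.rpow_sub hr, Real.rpow_one]
  have e2 : r ^ (γ - 1) = r ^ γ / r := by
    rw [Real.rpow_sub hr, Real.rpow_one]
  rw [e1, e2]
  field_simp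
  ring

theorem statement4 (ε γ : ℝ) (hε : 0 < ε) (hγ : 1 < γ) (d : ℕ)
    (hd : d = 1 ∨ d = 2 ∨ d = 3) (ρ : ℝ) (hρ : 0 < ρ)
    (S : Matrix (Fin d) (Fin d) ℝ) (hS : S.IsSymm) :
    (5 : ℝ) / 8 * hfun ε γ ρ * (∑ i, ∑ j, S i j ^ 2)
      ≤ hfun ε γ ρ * (∑ i, ∑ j, S i j ^ 2) + gfun ε γ ρ * (∑ i, S i i) ^ 2 := by
  set N := ∑ i, ∑ j, S i j ^ 2 with hN
  have hNnn : 0 ≤ N := Finset.sum_nonneg fun i _ => Finset.sum_nonneg fun j _ => sq_nonneg _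
  have hdiag : ∑ i, (S i i) ^ 2 ≤ N := by
    refine Finset.sum_le_sum fun i _ => ?_
    exact Finset.single_le_sum (fun j _ => sq_nonneg (S i j)) (Finset.mem_univ i)
  have hcard : (Finset.univ : Finset (Fin d)).card = d := by simp
  have ht2 : (∑ i, S i i) ^ 2 ≤ 3 * N := by
    have := sq_sum_le_card_mul_sum_sq (s := (Finset.univ : Finset (Fin d)))
      (f := fun i => S i i)
    rw [hcard] at this
    have hd3 : (d : ℝ) ≤ 3 := by rcases hd with h|h|h <;> simp [h] <;> norm_num
    calc (∑ i, S i i) ^ 2 ≤ (d : ℝ) * ∑ i, (S i i) ^ 2 := this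
      _ ≤ 3 * N := by
          have := Finset.sum_nonneg (fun i (_ : i ∈ (Finset.univ : Finset (Fin d))) => sq_nonneg (S i i))
          nlinarith
  have hrp : (0:ℝ) < ρ ^ ((7:ℝ)/8) := Real.rpow_pos_of_pos hρ _
  have hrg : (0:ℝ) < ρ ^ γ := Real.rpow_pos_of_pos hρ _
  have hg : -(ε * ρ ^ ((7:ℝ)/8)) / 8 ≤ gfun ε γ ρ := by
    rw [gfun_eq ε γ ρ hρ]
    nlinarith [mul_pos hε hrg]
  have hh : ε * ρ ^ ((7:ℝ)/8) ≤ hfun ε γ ρ := by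
    unfold hfun
    nlinarith [mul_pos hε hrg]
  nlinarith [mul_le_mul_of_nonneg_left ht2 (le_of_lt (by positivity : (0:ℝ) < ε * ρ ^ ((7:ℝ)/8) / 8)),
    mul_le_mul_of_nonneg_right hh hNnn, sq_nonneg (∑ i, S i i),
    mul_le_mul_of_nonneg_right hg (sq_nonneg (∑ i, S i i))]


end
end
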